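/- There exist ternary relations In, Eq, Sub on (k-forms) × (k-forms) × (abstract 2-configurations), independent of the underlying set of atoms, such that for all k-forms ψ, φ and all k-molecules τ, σ over any input structure: ψ * τ ∈ φ * σ iff In(ψ,φ,conf(τ,σ)); ψ * τ = φ * σ iff Eq(ψ,φ,conf(τ,σ)); and ψ * τ ⊆ φ * σ iff Sub(ψ,φ,conf(τ,σ)). -/

import Mathlib

open scoped Classical

/-- An abstract model of hereditarily finite sets over a set `A` of atoms,
together with the extension of permutations of atoms to all objects. -/
structure HFModel (A : Type) : Type 1 where
  Obj : Type
  atom : A → Obj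
  mkSet : Finset Obj → Obj
  members : Obj → Finset Obj
  act : Equiv.Perm A → Obj → Obj
  atom_injective : Function.Injective atom
  atom_ne_mkSet : ∀ a s, atom a ≠ mkSet s
  members_mkSet : ∀ s, members (mkSet s) = s
  members_atom : ∀ a, members (atom a) = ∅
  atom_or_set : ∀ x, (∃ a, x = atom a) ∨ (∃ s, x = mkSet s)
  act_atom : ∀ π a, act π (atom a) = atom (π a)
  act_mkSet : ∀ π s, act π (mkSet s) = mkSet (s.image (act π))
  act_one : ∀ x, act 1 x = x
  act_mul : ∀ π ρ x, act (π * ρ) x = act π (act ρ x)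

/-- Abstract 2-configurations for `k`-molecules with colours in `κ`. -/
structure Config2 (k : ℕ) (κ : Type) : Type where
  rel : Fin k → Fin k → Bool
  col₁ : Fin k → κ
  col₂ : Fin k → κ

/-- The configuration of a pair of `k`-molecules. -/
def conf {A κ : Type} [DecidableEq A] {k : ℕ} (col : A → κ) (τ σ : Fin k → A) :
    Config2 k κ :=
  ⟨fun p q => decide (τ p = σ q), col ∘ τ, col ∘ σ⟩

/-- `k`-forms. -/
inductive Form (k : ℕ) (κ : Type) : Type where
  | atom : Fin k → Form k κ
  | set : List (Form k κ × Config2 k κ) → Form k κ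

/-- Evaluation `φ * σ` of a `k`-form on a `k`-molecule. -/
noncomputable def evalForm {A κ : Type} [DecidableEq A] [Fintype A] {k : ℕ}
    (M : HFModel A) (col : A → κ) : (Fin k → A) → Form k κ → M.Obj
  | σ, .atom p => M.atom (σ p)
  | σ, .set l =>
      M.mkSet <| (l.attach.map (fun x =>
        (Finset.univ.filter
            (fun τ : Fin k → A => Function.Injective τ ∧ conf col τ σ = x.1.2)).image
          (fun τ => evalForm M col τ x.1.1))).foldr (· ∪ ·) ∅
  termination_by σ φ => sizeOf φ
  decreasing_by
    obtain ⟨⟨φ', E'⟩, hmem⟩ := x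
    have h := List.sizeOf_lt_of_mem hmem
    simp at h ⊢
    omega

/-- The orbit `G x` of an object under a finite set of permutations, as an object. -/
noncomputable def orbitObj {A : Type} (M : HFModel A) (G : Finset (Equiv.Perm A))
    (x : M.Obj) : M.Obj :=
  M.mkSet (G.image (fun g => M.act g x))

/-- The object `⋃_{h ∈ H} φ * (h ∘ σ)`. -/
noncomputable def unionEval {A κ : Type} [DecidableEq A] [Fintype A] {k : ℕ}
    (M : HFModel A) (col : A → κ) (H : Finset (Equiv.Perm A)) (φ : Form k κ)
    (σ : Fin k → A) : M.Obj :=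
  M.mkSet (H.biUnion (fun h => M.members (evalForm M col (⇑h ∘ σ) φ)))

/-- The orbit-form evaluation `(φ,G,H) * σ = G(⋃_{h∈H} φ * hσ)`. -/
noncomputable def orbitEval {A κ : Type} [DecidableEq A] [Fintype A] {k : ℕ}
    (M : HFModel A) (col : A → κ) (φ : Form k κ) (G H : Finset (Equiv.Perm A))
    (σ : Fin k → A) : M.Obj :=
  orbitObj M G (unionEval M col H φ σ)

/-- A finite set of permutations forming a subgroup. -/
def IsSubgroupF {A : Type} (G : Finset (Equiv.Perm A)) : Prop :=
  (1 : Equiv.Perm A) ∈ G ∧ (∀ g ∈ G, g⁻¹ ∈ G) ∧ ∀ g ∈ G, ∀ h ∈ G, g * h ∈ G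

/-- Colour-preserving permutations (automorphisms). -/
def IsAut {A κ : Type} (col : A → κ) (π : Equiv.Perm A) : Prop :=
  ∀ a, col (π a) = col a

/-- `X` is a support of object `x`. -/
def SupportsObj {A κ : Type} (M : HFModel A) (col : A → κ) (X : Set A) (x : M.Obj) : Prop :=
  ∀ π : Equiv.Perm A, IsAut col π → (∀ a ∈ X, π a = a) → M.act π x = x

/-- Transitive-closure membership. -/
inductive InTC {A : Type} (M : HFModel A) : M.Obj → M.Obj → Prop where
  | mem {x y} : x ∈ M.members y → InTC M x y
  | trans {x z y} : x ∈ M.members z → InTC M z y → InTC M x y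

/-- `y` is a transitive set. -/
def TransitiveObj {A : Type} (M : HFModel A) (y : M.Obj) : Prop :=
  ∀ z ∈ M.members y, ∀ w ∈ M.members z, w ∈ M.members y

/-- `x` is `k`-skew-symmetric. -/
def SkewSym {A κ : Type} (M : HFModel A) (col : A → κ) (k : ℕ) (x : M.Obj) : Prop :=
  ∃ (G : Finset (Equiv.Perm A)) (y : M.Obj), IsSubgroupF G ∧ x = orbitObj M G y ∧
    TransitiveObj M y ∧
    ∀ z, (z = y ∨ InTC M z y) →
      ∃ X : Finset A, X.card ≤ k ∧ SupportsObj M col X (orbitObj M G z)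


/-!
The relations are defined by recursion on the forms, mirroring the evaluation. An element of
`φ * σ` is `χ * τ'` for a component `(χ, D)` of `φ` and an injective `τ'` with
`conf(τ', σ) = D`; whether it equals `ψ * τ` depends, by induction, only on `conf(τ', τ)`.
So the search over molecules `τ'` can be replaced by a search over consistent ternary
configurations `Q` with `Q_{1,2} = conf(τ, σ)`: every such `Q` is realised, since the positions
of `τ'` that `Q` does not identify with atoms of `τ` or `σ` can be filled with fresh atoms of the
required colours (the configuration extension lemma). Inclusion reduces to membership of
components, and equality of two sets to inclusion both ways.
-/

def Config2.swap {k : ℕ} {κ : Type} (E : Config2 k κ) : Config2 k κ :=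
  ⟨fun p q => E.rel q p, E.col₂, E.col₁⟩

/-- `Q.projij` is the binary configuration `Q_{i,j}` of the paper. -/
structure Config3 (k : ℕ) (κ : Type) : Type where
  r01 : Fin k → Fin k → Bool
  r02 : Fin k → Fin k → Bool
  r12 : Fin k → Fin k → Bool
  c0 : Fin k → κ
  c1 : Fin k → κ
  c2 : Fin k → κ

namespace Config3

variable {k : ℕ} {κ : Type}

def proj01 (Q : Config3 k κ) : Config2 k κ := ⟨Q.r01, Q.c0, Q.c1⟩
def proj02 (Q : Config3 k κ) : Config2 k κ := ⟨Q.r02, Q.c0, Q.c2⟩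
def proj12 (Q : Config3 k κ) : Config2 k κ := ⟨Q.r12, Q.c1, Q.c2⟩

structure Consistent (Q : Config3 k κ) : Prop where
  col01 : ∀ p q, Q.r01 p q = true → Q.c0 p = Q.c1 q
  col02 : ∀ p r, Q.r02 p r = true → Q.c0 p = Q.c2 r
  col12 : ∀ q r, Q.r12 q r = true → Q.c1 q = Q.c2 r
  fun01 : ∀ p q q', Q.r01 p q = true → Q.r01 p q' = true → q = q'
  inj01 : ∀ p p' q, Q.r01 p q = true → Q.r01 p' q = true → p = p'
  fun02 : ∀ p r r', Q.r02 p r = true → Q.r02 p r' = true → r = r'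
  inj02 : ∀ p p' r, Q.r02 p r = true → Q.r02 p' r = true → p = p'
  fun12 : ∀ q r r', Q.r12 q r = true → Q.r12 q r' = true → r = r'
  inj12 : ∀ q q' r, Q.r12 q r = true → Q.r12 q' r = true → q = q'
  trans012 : ∀ p q r, Q.r01 p q = true → Q.r12 q r = true → Q.r02 p r = true
  trans102 : ∀ p q r, Q.r01 p q = true → Q.r02 p r = true → Q.r12 q r = true
  trans021 : ∀ p q r, Q.r02 p r = true → Q.r12 q r = true → Q.r01 p q = true

end Config3

section Configurations

variable {A κ : Type} [DecidableEq A] {k : ℕ}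

theorem conf_eq_iff (col : A → κ) (τ σ : Fin k → A) (E : Config2 k κ) :
    conf col τ σ = E ↔ (∀ p q, τ p = σ q ↔ E.rel p q = true) ∧
      (∀ p, col (τ p) = E.col₁ p) ∧ ∀ q, col (σ q) = E.col₂ q := by
  obtain ⟨r, c₁, c₂⟩ := E
  simp only [conf, Config2.mk.injEq, funext_iff, Function.comp_apply]
  refine and_congr_left' (forall₂_congr fun p q => ?_)
  cases r p q <;> simp

theorem conf_swap (col : A → κ) (τ σ : Fin k → A) :
    (conf col τ σ).swap = conf col σ τ := by
  simp only [conf, Config2.swap, eq_comm]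

def conf3 (col : A → κ) (τ₀ τ₁ τ₂ : Fin k → A) : Config3 k κ :=
  ⟨fun p q => decide (τ₀ p = τ₁ q), fun p r => decide (τ₀ p = τ₂ r),
   fun q r => decide (τ₁ q = τ₂ r), col ∘ τ₀, col ∘ τ₁, col ∘ τ₂⟩

theorem conf3_consistent (col : A → κ) {τ₀ τ₁ τ₂ : Fin k → A} (h₀ : Function.Injective τ₀)
    (h₁ : Function.Injective τ₁) (h₂ : Function.Injective τ₂) :
    (conf3 col τ₀ τ₁ τ₂).Consistent where
  col01 _ _ h := by simp_all [conf3]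
  col02 _ _ h := by simp_all [conf3]
  col12 _ _ h := by simp_all [conf3]
  fun01 _ _ _ h h' := by simp_all [conf3, h₁.eq_iff]
  inj01 _ _ _ h h' := h₀ <| by simp_all [conf3]
  fun02 _ _ _ h h' := by simp_all [conf3, h₂.eq_iff]
  inj02 _ _ _ h h' := h₀ <| by simp_all [conf3]
  fun12 _ _ _ h h' := by simp_all [conf3, h₂.eq_iff]
  inj12 _ _ _ h h' := h₁ <| by simp_all [conf3]
  trans012 _ _ _ h h' := by simp_all [conf3]
  trans102 _ _ _ h h' := by simp_all [conf3]
  trans021 _ _ _ h h' := by simp_all [conf3]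

end Configurations

theorem exists_injective_colored_avoiding {ι A κ : Type} [Fintype ι] [DecidableEq A]
    [Fintype A] (col : A → κ) (f : ι → κ) (B : Finset A)
    (h : ∀ i, B.card + Fintype.card ι ≤ (Finset.univ.filter fun a => col a = f i).card) :
    ∃ g : ι → A, Function.Injective g ∧ ∀ i, col (g i) = f i ∧ g i ∉ B := by
  set t : ι → Finset A := fun i => (Finset.univ.filter fun a => col a = f i) \ B
  obtain ⟨g, hg, hgt⟩ := (Finset.all_card_le_biUnion_card_iff_exists_injective t).1 <| by
    intro s
    rcases s.eq_empty_or_nonempty with rfl | ⟨i, hi⟩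
    · simp
    calc s.card ≤ Fintype.card ι := Finset.card_le_univ s
      _ ≤ (t i).card := by
        have := Finset.le_card_sdiff B (Finset.univ.filter fun a => col a = f i)
        have := h i
        simp only [t]
        omega
      _ ≤ (s.biUnion t).card := Finset.card_le_card (Finset.subset_biUnion_of_mem t hi)
  refine ⟨g, hg, fun i => ?_⟩
  simpa [t] using hgt i

namespace Config3

variable {A κ : Type} [DecidableEq A] {k : ℕ}

def Linked (Q : Config3 k κ) (p : Fin k) : Prop :=
  (∃ q, Q.r01 p q = true) ∨ ∃ r, Q.r02 p r = true

structure FreshExtension (Q : Config3 k κ) (col : A → κ) (τ σ τ' : Fin k → A) : Prop where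
  eq_left : ∀ p q, Q.r01 p q = true → τ' p = τ q
  eq_right : ∀ p r, Q.r02 p r = true → τ' p = σ r
  col_fresh : ∀ p, ¬ Q.Linked p → col (τ' p) = Q.c0 p
  ne_left : ∀ p q, ¬ Q.Linked p → τ' p ≠ τ q
  ne_right : ∀ p r, ¬ Q.Linked p → τ' p ≠ σ r
  injOn_fresh : ∀ p p', ¬ Q.Linked p → ¬ Q.Linked p' → τ' p = τ' p' → p = p'

namespace FreshExtension

variable {Q : Config3 k κ} {col : A → κ} {τ σ τ' : Fin k → A}

theorem eq_left_iff (h : Q.FreshExtension col τ σ τ') (hQ : Q.Consistent)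
    (h12 : conf col τ σ = Q.proj12) (hτ : Function.Injective τ) (p q : Fin k) :
    τ' p = τ q ↔ Q.r01 p q = true := by
  refine ⟨fun hpq => ?_, h.eq_left p q⟩
  have hrel := ((conf_eq_iff col τ σ _).1 h12).1
  by_cases hp : Q.Linked p
  · rcases hp with ⟨q₀, hq₀⟩ | ⟨r₀, hr₀⟩
    · rwa [← hτ ((h.eq_left p q₀ hq₀).symm.trans hpq)]
    · exact hQ.trans021 p q r₀ hr₀ ((hrel q r₀).1 (hpq.symm.trans (h.eq_right p r₀ hr₀)))
  · exact absurd hpq (h.ne_left p q hp)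

theorem eq_right_iff (h : Q.FreshExtension col τ σ τ') (hQ : Q.Consistent)
    (h12 : conf col τ σ = Q.proj12) (hσ : Function.Injective σ) (p r : Fin k) :
    τ' p = σ r ↔ Q.r02 p r = true := by
  have hrel := ((conf_eq_iff col τ σ _).1 h12).1
  by_cases hp : Q.Linked p
  · rcases hp with ⟨q₀, hq₀⟩ | ⟨r₀, hr₀⟩
    · rw [h.eq_left p q₀ hq₀, hrel]
      exact ⟨hQ.trans012 p q₀ r hq₀, hQ.trans102 p q₀ r hq₀⟩
    · rw [h.eq_right p r₀ hr₀, hσ.eq_iff]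
      exact ⟨fun h => h ▸ hr₀, hQ.fun02 p r₀ r hr₀⟩
  · exact ⟨fun hpr => absurd hpr (h.ne_right p r hp),
      fun hpr => absurd (Or.inr ⟨r, hpr⟩) hp⟩

theorem col_eq (h : Q.FreshExtension col τ σ τ') (hQ : Q.Consistent)
    (h12 : conf col τ σ = Q.proj12) (p : Fin k) : col (τ' p) = Q.c0 p := by
  obtain ⟨-, hcol₁, hcol₂⟩ := (conf_eq_iff col τ σ _).1 h12
  by_cases hp : Q.Linked p
  · rcases hp with ⟨q₀, hq₀⟩ | ⟨r₀, hr₀⟩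
    · rw [h.eq_left p q₀ hq₀, hcol₁, hQ.col01 p q₀ hq₀]
      rfl
    · rw [h.eq_right p r₀ hr₀, hcol₂, hQ.col02 p r₀ hr₀]
      rfl
  · exact h.col_fresh p hp

theorem injective (h : Q.FreshExtension col τ σ τ') (hQ : Q.Consistent)
    (h12 : conf col τ σ = Q.proj12) (hτ : Function.Injective τ) (hσ : Function.Injective σ) :
    Function.Injective τ' := by
  have linked_eq {p p'} (hp' : Q.Linked p') (hpp' : τ' p = τ' p') : p = p' := by
    rcases hp' with ⟨q₀, hq₀⟩ | ⟨r₀, hr₀⟩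
    · exact hQ.inj01 p p' q₀
        ((h.eq_left_iff hQ h12 hτ p q₀).1 (hpp'.trans (h.eq_left p' q₀ hq₀))) hq₀
    · exact hQ.inj02 p p' r₀
        ((h.eq_right_iff hQ h12 hσ p r₀).1 (hpp'.trans (h.eq_right p' r₀ hr₀))) hr₀
  intro p p' hpp'
  by_cases hp' : Q.Linked p'
  · exact linked_eq hp' hpp'
  by_cases hp : Q.Linked p
  · exact (linked_eq hp hpp'.symm).symm
  exact h.injOn_fresh p p' hp hp' hpp'

end FreshExtension

theorem exists_freshExtension [Fintype A] {Q : Config3 k κ} (hQ : Q.Consistent) {col : A → κ}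
    (hcard : ∀ c : κ, 3 * k ≤ (Finset.univ.filter fun a : A => col a = c).card)
    {τ σ : Fin k → A} (h12 : conf col τ σ = Q.proj12) :
    ∃ τ', Q.FreshExtension col τ σ τ' := by
  set B := Finset.univ.image τ ∪ Finset.univ.image σ
  -- `τ` and `σ` occupy at most `2k` atoms and at most `k` fresh ones are needed: hence `3k`.
  obtain ⟨g, hg, hgB⟩ := exists_injective_colored_avoiding col
    (fun p : {p // ¬ Q.Linked p} => Q.c0 p) B fun p => by
      have : B.card ≤ k + k := (Finset.card_union_le _ _).trans <| Nat.add_le_add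
        (Finset.card_image_le.trans_eq (Finset.card_fin k))
        (Finset.card_image_le.trans_eq (Finset.card_fin k))
      have : Fintype.card {p // ¬ Q.Linked p} ≤ k :=
        (Fintype.card_subtype_le _).trans_eq (Fintype.card_fin k)
      have := hcard (Q.c0 p)
      omega
  have hrel := ((conf_eq_iff col τ σ _).1 h12).1
  let τ' : Fin k → A := fun p =>
    if h₁ : ∃ q, Q.r01 p q = true then τ h₁.choose
    else if h₂ : ∃ r, Q.r02 p r = true then σ h₂.choose
    else g ⟨p, by simp only [Linked, not_or]; exact ⟨h₁, h₂⟩⟩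
  have τ'_fresh (p) (hp : ¬ Q.Linked p) : τ' p = g ⟨p, hp⟩ := by
    simp only [Linked, not_or] at hp
    simp only [τ', dif_neg hp.1, dif_neg hp.2]
  refine ⟨τ', ⟨fun p q hpq => ?_, fun p r hpr => ?_, fun p hp => ?_, fun p q hp => ?_,
    fun p r hp => ?_, fun p p' hp hp' hpp' => ?_⟩⟩
  · have h₁ : ∃ q, Q.r01 p q = true := ⟨q, hpq⟩
    simp only [τ', dif_pos h₁, hQ.fun01 p _ q h₁.choose_spec hpq]
  · by_cases h₁ : ∃ q, Q.r01 p q = true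
    · simp only [τ', dif_pos h₁]
      exact (hrel _ r).2 (hQ.trans102 p _ r h₁.choose_spec hpr)
    · have h₂ : ∃ r, Q.r02 p r = true := ⟨r, hpr⟩
      simp only [τ', dif_neg h₁, dif_pos h₂, hQ.fun02 p _ r h₂.choose_spec hpr]
  · rw [τ'_fresh p hp]
    exact (hgB _).1
  · rw [τ'_fresh p hp]
    exact fun hq => (hgB ⟨p, hp⟩).2 (by simp [B, hq])
  · rw [τ'_fresh p hp]
    exact fun hr => (hgB ⟨p, hp⟩).2 (by simp [B, hr])
  · rw [τ'_fresh p hp, τ'_fresh p' hp'] at hpp'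
    exact congrArg Subtype.val (hg hpp')

end Config3

theorem exists_conf_extension {A κ : Type} [DecidableEq A] [Fintype A] {k : ℕ} (col : A → κ)
    (hcard : ∀ c : κ, 3 * k ≤ (Finset.univ.filter fun a : A => col a = c).card)
    {Q : Config3 k κ} (hQ : Q.Consistent) {τ σ : Fin k → A} (hτ : Function.Injective τ)
    (hσ : Function.Injective σ) (h12 : conf col τ σ = Q.proj12) :
    ∃ τ', Function.Injective τ' ∧
      conf col τ' τ = Q.proj01 ∧ conf col τ' σ = Q.proj02 := by
  obtain ⟨τ', h⟩ := Config3.exists_freshExtension hQ hcard h12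
  obtain ⟨-, hcol₁, hcol₂⟩ := (conf_eq_iff col τ σ _).1 h12
  exact ⟨τ', h.injective hQ h12 hτ hσ,
    (conf_eq_iff _ _ _ _).2 ⟨h.eq_left_iff hQ h12 hτ, h.col_eq hQ h12, hcol₁⟩,
    (conf_eq_iff _ _ _ _).2 ⟨h.eq_right_iff hQ h12 hσ, h.col_eq hQ h12, hcol₂⟩⟩

namespace Form

variable {k : ℕ} {κ : Type}

theorem sizeOf_fst_lt_of_mem {x : Form k κ × Config2 k κ} {l : List (Form k κ × Config2 k κ)}
    (h : x ∈ l) : sizeOf x.1 < sizeOf (Form.set l) := by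
  have := List.sizeOf_lt_of_mem h
  cases x
  simp only [Prod.mk.sizeOf_spec, set.sizeOf_spec] at this ⊢
  omega

mutual

def InRel : Form k κ → Form k κ → Config2 k κ → Prop
  | _, .atom _, _ => False
  | ψ, .set m, E => ∃ x, ∃ _ : x ∈ m, ∃ Q : Config3 k κ,
      Q.Consistent ∧ Q.proj12 = E ∧ Q.proj02 = x.2 ∧ EqRel x.1 ψ Q.proj01
termination_by ψ φ _ => (sizeOf ψ + sizeOf φ, 0)
decreasing_by
  have := sizeOf_fst_lt_of_mem ‹x ∈ m›
  simp only [set.sizeOf_spec] at this ⊢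
  exact Prod.Lex.left _ _ (by omega)

def SubRel : Form k κ → Form k κ → Config2 k κ → Prop
  | .atom _, _, _ => True
  | .set l, φ, E => ∀ x ∈ l, ∀ Q : Config3 k κ,
      Q.Consistent → Q.proj12 = E → Q.proj01 = x.2 → InRel x.1 φ Q.proj02
termination_by ψ φ _ => (sizeOf ψ + sizeOf φ, 1)
decreasing_by
  have := sizeOf_fst_lt_of_mem ‹x ∈ l›
  simp only [set.sizeOf_spec] at this ⊢
  exact Prod.Lex.left _ _ (by omega)

def EqRel : Form k κ → Form k κ → Config2 k κ → Prop
  | .atom p, .atom q, E => E.rel p q = true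
  | .atom _, .set _, _ => False
  | .set _, .atom _, _ => False
  | .set l, .set m, E => SubRel (.set l) (.set m) E ∧ SubRel (.set m) (.set l) E.swap
termination_by ψ φ _ => (sizeOf ψ + sizeOf φ, 2)
decreasing_by
  · exact Prod.Lex.right _ (by omega)
  · exact Prod.Lex.right' _ (by omega) (by omega)

end

end Form

theorem List.mem_foldr_union {α : Type} [DecidableEq α] (L : List (Finset α)) (x : α) :
    x ∈ L.foldr (· ∪ ·) ∅ ↔ ∃ s ∈ L, x ∈ s := by
  induction L with
  | nil => simp
  | cons a L ih => simp [ih]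

section Evaluation

variable {A κ : Type} [DecidableEq A] [Fintype A] {k : ℕ} (M : HFModel A) (col : A → κ)

theorem evalForm_atom (σ : Fin k → A) (p : Fin k) :
    evalForm M col σ (.atom p) = M.atom (σ p) := by
  rw [evalForm]

theorem evalForm_set_eq_mkSet (σ : Fin k → A) (l : List (Form k κ × Config2 k κ)) :
    evalForm M col σ (.set l) = M.mkSet (M.members (evalForm M col σ (.set l))) := by
  rw [evalForm, M.members_mkSet]

theorem mem_members_evalForm_set (σ : Fin k → A) (l : List (Form k κ × Config2 k κ))
    (x : M.Obj) :
    x ∈ M.members (evalForm M col σ (.set l)) ↔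
      ∃ y ∈ l, ∃ τ, Function.Injective τ ∧ conf col τ σ = y.2 ∧
        x = evalForm M col τ y.1 := by
  rw [evalForm, M.members_mkSet, List.mem_foldr_union]
  simp [eq_comm (a := x)]

end Evaluation

namespace Form

variable {A κ : Type} [DecidableEq A] [Fintype A] {k : ℕ} {M : HFModel A} {col : A → κ}

theorem mem_evalForm_set_iff_inRel
    (hcard : ∀ c : κ, 3 * k ≤ (Finset.univ.filter fun a : A => col a = c).card)
    {ψ : Form k κ} {m : List (Form k κ × Config2 k κ)} {τ σ : Fin k → A}
    (hEq : ∀ x ∈ m, ∀ τ' : Fin k → A, Function.Injective τ' →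
      (evalForm M col τ' x.1 = evalForm M col τ ψ ↔ EqRel x.1 ψ (conf col τ' τ)))
    (hτ : Function.Injective τ) (hσ : Function.Injective σ) :
    evalForm M col τ ψ ∈ M.members (evalForm M col σ (.set m)) ↔
      InRel ψ (.set m) (conf col τ σ) := by
  rw [mem_members_evalForm_set, InRel]
  constructor
  · rintro ⟨x, hx, τ', hτ', hconf, heq⟩
    exact ⟨x, hx, conf3 col τ' τ σ, conf3_consistent col hτ' hτ hσ, rfl, hconf,
      (hEq x hx τ' hτ').1 heq.symm⟩
  · rintro ⟨x, hx, Q, hQ, h12, h02, hrel⟩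
    obtain ⟨τ', hτ', h01, h02'⟩ := exists_conf_extension col hcard hQ hτ hσ h12.symm
    exact ⟨x, hx, τ', hτ', h02'.trans h02, ((hEq x hx τ' hτ').2 (h01 ▸ hrel)).symm⟩

theorem members_evalForm_set_subset_iff_subRel
    (hcard : ∀ c : κ, 3 * k ≤ (Finset.univ.filter fun a : A => col a = c).card)
    {l : List (Form k κ × Config2 k κ)} {φ : Form k κ} {τ σ : Fin k → A}
    (hIn : ∀ x ∈ l, ∀ τ' : Fin k → A, Function.Injective τ' →
      (evalForm M col τ' x.1 ∈ M.members (evalForm M col σ φ) ↔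
        InRel x.1 φ (conf col τ' σ)))
    (hτ : Function.Injective τ) (hσ : Function.Injective σ) :
    M.members (evalForm M col τ (.set l)) ⊆ M.members (evalForm M col σ φ) ↔
      SubRel (.set l) φ (conf col τ σ) := by
  rw [SubRel]
  constructor
  · intro hsub x hx Q hQ h12 h01
    obtain ⟨τ', hτ', h01', h02'⟩ := exists_conf_extension col hcard hQ hτ hσ h12.symm
    rw [← h02', ← hIn x hx τ' hτ']
    exact hsub <|
      (mem_members_evalForm_set M col τ l _).2 ⟨x, hx, τ', hτ', h01'.trans h01, rfl⟩
  · intro hrel _ hy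
    obtain ⟨x, hx, τ', hτ', hconf, rfl⟩ := (mem_members_evalForm_set M col τ l _).1 hy
    exact (hIn x hx τ' hτ').2 (hrel x hx _ (conf3_consistent col hτ' hτ hσ) rfl hconf)

theorem evalForm_eq_iff_eqRel {ψ φ : Form k κ} {τ σ : Fin k → A}
    (hsub : M.members (evalForm M col τ ψ) ⊆ M.members (evalForm M col σ φ) ↔
      SubRel ψ φ (conf col τ σ))
    (hsup : M.members (evalForm M col σ φ) ⊆ M.members (evalForm M col τ ψ) ↔
      SubRel φ ψ (conf col σ τ)) :
    evalForm M col τ ψ = evalForm M col σ φ ↔ EqRel ψ φ (conf col τ σ) := by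
  cases ψ with
  | atom p =>
    cases φ with
    | atom q =>
      rw [evalForm_atom, evalForm_atom, EqRel, M.atom_injective.eq_iff]
      simp [conf]
    | set m =>
      rw [evalForm_atom, evalForm_set_eq_mkSet, EqRel]
      exact iff_false_intro (M.atom_ne_mkSet _ _)
  | set l =>
    cases φ with
    | atom q =>
      rw [evalForm_atom, evalForm_set_eq_mkSet, EqRel]
      exact iff_false_intro fun h => M.atom_ne_mkSet _ _ h.symm
    | set m =>
      rw [EqRel, conf_swap, ← hsub, ← hsup, ← Finset.Subset.antisymm_iff]
      constructor
      · exact congrArg M.members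
      · intro h
        rw [evalForm_set_eq_mkSet, h, ← evalForm_set_eq_mkSet]

mutual

theorem mem_members_evalForm_iff
    (hcard : ∀ c : κ, 3 * k ≤ (Finset.univ.filter fun a : A => col a = c).card)
    (ψ φ : Form k κ) {τ σ : Fin k → A} (hτ : Function.Injective τ)
    (hσ : Function.Injective σ) :
    evalForm M col τ ψ ∈ M.members (evalForm M col σ φ) ↔ InRel ψ φ (conf col τ σ) :=
  match φ with
  | .atom _ => by simp only [evalForm_atom, M.members_atom, InRel, Finset.notMem_empty]
  | .set _ => mem_evalForm_set_iff_inRel hcard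
      (fun x _ _ hτ' => evalForm_eq_iff hcard x.1 ψ hτ' hτ) hτ hσ
termination_by (sizeOf ψ + sizeOf φ, 0)
decreasing_by
  have := sizeOf_fst_lt_of_mem ‹x ∈ _›
  simp only [set.sizeOf_spec] at this ⊢
  exact Prod.Lex.left _ _ (by omega)

theorem members_evalForm_subset_iff
    (hcard : ∀ c : κ, 3 * k ≤ (Finset.univ.filter fun a : A => col a = c).card)
    (ψ φ : Form k κ) {τ σ : Fin k → A} (hτ : Function.Injective τ)
    (hσ : Function.Injective σ) :
    M.members (evalForm M col τ ψ) ⊆ M.members (evalForm M col σ φ) ↔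
      SubRel ψ φ (conf col τ σ) :=
  match ψ with
  | .atom _ => by simp only [evalForm_atom, M.members_atom, SubRel, Finset.empty_subset]
  | .set _ => members_evalForm_set_subset_iff_subRel hcard
      (fun x _ _ hτ' => mem_members_evalForm_iff hcard x.1 φ hτ' hσ) hτ hσ
termination_by (sizeOf ψ + sizeOf φ, 1)
decreasing_by
  have := sizeOf_fst_lt_of_mem ‹x ∈ _›
  simp only [set.sizeOf_spec] at this ⊢
  exact Prod.Lex.left _ _ (by omega)

theorem evalForm_eq_iff
    (hcard : ∀ c : κ, 3 * k ≤ (Finset.univ.filter fun a : A => col a = c).card)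
    (ψ φ : Form k κ) {τ σ : Fin k → A} (hτ : Function.Injective τ)
    (hσ : Function.Injective σ) :
    evalForm M col τ ψ = evalForm M col σ φ ↔ EqRel ψ φ (conf col τ σ) :=
  evalForm_eq_iff_eqRel (members_evalForm_subset_iff hcard ψ φ hτ hσ)
    (members_evalForm_subset_iff hcard φ ψ hσ hτ)
termination_by (sizeOf ψ + sizeOf φ, 2)
decreasing_by
  · exact Prod.Lex.right _ (by omega)
  · exact Prod.Lex.right' _ (by omega) (by omega)

end

end Form

/-- There are ternary relations `In`, `Eq`, `Sub` on forms and configurations,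
independent of the underlying set of atoms, characterising membership, equality
and inclusion of evaluated forms. -/
theorem relations_over_forms_and_configurations {κ : Type} (k : ℕ) :
    ∃ (In Eq' Sub : Form k κ → Form k κ → Config2 k κ → Prop),
      ∀ (A : Type) [DecidableEq A] [Fintype A],
        ∀ (M : HFModel A) (col : A → κ),
          (∀ c : κ, 3 * k ≤ (Finset.univ.filter (fun a : A => col a = c)).card) →
          ∀ (ψ φ : Form k κ) (τ σ : Fin k → A),
            Function.Injective τ → Function.Injective σ →
            ((evalForm M col τ ψ ∈ M.members (evalForm M col σ φ)) ↔
              In ψ φ (conf col τ σ)) ∧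
            ((evalForm M col τ ψ = evalForm M col σ φ) ↔ Eq' ψ φ (conf col τ σ)) ∧
            ((M.members (evalForm M col τ ψ) ⊆ M.members (evalForm M col σ φ)) ↔
              Sub ψ φ (conf col τ σ)) := by
  refine ⟨Form.InRel, Form.EqRel, Form.SubRel, fun _ _ _ _ _ hcard ψ φ _ _ hτ hσ => ?_⟩
  exact ⟨Form.mem_members_evalForm_iff hcard ψ φ hτ hσ, Form.evalForm_eq_iff hcard ψ φ hτ hσ,
    Form.members_evalForm_subset_iff hcard ψ φ hτ hσ⟩
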